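/- arXiv:2207.05646 — 7 statements merged into one kernel-verified Lean document; each statement's English description precedes it below -/
import Mathlib

section
/- The complementary map of a ReMAD channel with transition matrix Γ is, up to the isometry identifying environment basis states with system basis states, itself a ReMAD channel with transition matrix Γ̃ whose entries are γ̃_{j,k} = γ_{j,j-k}; equivalently, the complementary Kraus operators Q^{(i)} = Σ_{l=0}^{d-i-1} √(γ_{i+l,i}) |l⟩⟨i+l| equal the ReMAD Kraus operators K̃^{(i)} built from Γ̃. -/
open scoped BigOperators
open Matrix

/-- ReMAD Kraus operator for a transition matrix `Δ`:
`K_Δ^{(i)} = Σ_{l=0}^{d-i-1} √(δ_{i+l,l}) |l⟩⟨i+l|`. -/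
noncomputable def remadKraus (d : ℕ) (δ : ℕ → ℕ → ℝ) (i : Fin d) :
    Matrix (Fin d) (Fin d) ℂ :=
  Matrix.of fun a b => if (b : ℕ) = (i : ℕ) + (a : ℕ) then ((Real.sqrt (δ b a) : ℝ) : ℂ) else 0

/-- Complementary Kraus operator `Q^{(i)} = Σ_{l=0}^{d-i-1} √(γ_{i+l,i}) |l⟩⟨i+l|`
(written, via the isometry identifying environment basis states with system basis
states, as a `d × d` matrix). -/
noncomputable def remadComplKraus (d : ℕ) (γ : ℕ → ℕ → ℝ) (i : Fin d) :
    Matrix (Fin d) (Fin d) ℂ :=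
  Matrix.of fun a b => if (b : ℕ) = (i : ℕ) + (a : ℕ) then ((Real.sqrt (γ b i) : ℝ) : ℂ) else 0

theorem remad_complementary_is_remad_general (d : ℕ) (γ : ℕ → ℕ → ℝ) :
    ∀ i : Fin d, remadComplKraus d γ i = remadKraus d (fun j k => γ j (j - k)) i := by
  intro i
  ext a b
  simp only [remadComplKraus, remadKraus, Matrix.of_apply]
  -- on the common support `b = i + a`, `γ̃_{b,a} = γ_{b,b-a} = γ_{b,i}`
  split_ifs with hb
  · rw [hb, Nat.add_sub_cancel]
  · rfl

/-- The complementary map of a ReMAD channel is (up to the system–environment isometry)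
itself a ReMAD channel, with transition matrix `Γ̃` given by `γ̃_{j,k} = γ_{j,j-k}`:
the complementary Kraus operators `Q^{(i)}` equal the ReMAD Kraus operators built from `Γ̃`. -/
theorem remad_complementary_is_remad (d : ℕ) (hd : 1 ≤ d) (γ : ℕ → ℕ → ℝ)
    (hnn : ∀ j k : ℕ, k ≤ j → j < d → 0 ≤ γ j k)
    (hsum : ∀ j : ℕ, j < d → ∑ k ∈ Finset.range (j + 1), γ j k = 1) :
    ∀ i : Fin d, remadComplKraus d γ i = remadKraus d (fun j k => γ j (j - k)) i :=
  remad_complementary_is_remad_general d γ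
end

section
/- The composition of two qutrit ReMAD channels Φ_{Γ'} ∘ Φ_Γ is again a ReMAD channel if and only if (on matrices with nonvanishing off-diagonal entries) the constraint γ_{10} γ'_{21} (1-γ_{21}-γ_{20}) = γ_{21} γ'_{10} (1-γ_{10})(1-γ'_{10}) holds; in that case the composite is Φ_{Γ''} with γ''_{10} = γ_{10} + γ'_{10}(1-γ_{10}), γ''_{20} = γ_{20} + γ'_{10}γ_{21} + γ'_{20}(1-γ_{21}-γ_{20}), γ''_{21} = (1-γ'_{10})γ_{21} + γ'_{21}(1-γ_{21}-γ_{20}). -/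
open Matrix
/-- First qutrit ReMAD Kraus operator `K^{(0)} = diag(1, √(1-γ₁₀), √(1-γ₂₁-γ₂₀))`. -/
noncomputable def K0 (g10 g21 g20 : ℝ) : Matrix (Fin 3) (Fin 3) ℂ :=
  !![(1 : ℂ), 0, 0;
     0, ((Real.sqrt (1 - g10) : ℝ) : ℂ), 0;
     0, 0, ((Real.sqrt (1 - g21 - g20) : ℝ) : ℂ)]

/-- Second qutrit ReMAD Kraus operator `K^{(1)} = √γ₁₀ |0⟩⟨1| + √γ₂₁ |1⟩⟨2|`. -/
noncomputable def K1 (g10 g21 : ℝ) : Matrix (Fin 3) (Fin 3) ℂ :=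
  !![(0 : ℂ), ((Real.sqrt g10 : ℝ) : ℂ), 0;
     0, 0, ((Real.sqrt g21 : ℝ) : ℂ);
     0, 0, 0]

/-- Third qutrit ReMAD Kraus operator `K^{(2)} = √γ₂₀ |0⟩⟨2|`. -/
noncomputable def K2 (g20 : ℝ) : Matrix (Fin 3) (Fin 3) ℂ :=
  !![(0 : ℂ), 0, ((Real.sqrt g20 : ℝ) : ℂ);
     0, 0, 0;
     0, 0, 0]

/-- The qutrit ReMAD channel `Φ_Γ(ρ) = Σ_{i=0}^{2} K^{(i)} ρ K^{(i)†}`. -/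
noncomputable def Phi (g10 g21 g20 : ℝ) (ρ : Matrix (Fin 3) (Fin 3) ℂ) :
    Matrix (Fin 3) (Fin 3) ℂ :=
  K0 g10 g21 g20 * ρ * (K0 g10 g21 g20)ᴴ + K1 g10 g21 * ρ * (K1 g10 g21)ᴴ +
    K2 g20 * ρ * (K2 g20)ᴴ

/-- Key square-root identity for the composition of ReMAD channels. -/
lemma remad_key (g10 g21 g20 g10' g21' g20' : ℝ)
    (h10 : 0 ≤ g10) (h10' : g10 ≤ 1) (h21 : 0 ≤ g21)
    (h20 : 0 ≤ g20) (hsum : g21 + g20 ≤ 1)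
    (h10p : 0 ≤ g10') (h10p' : g10' ≤ 1) (h21p : 0 ≤ g21')
    (hcon : g10 * g21' * (1 - g21 - g20) = g21 * g10' * (1 - g10) * (1 - g10')) :
    Real.sqrt (1 - g10') * Real.sqrt g10 * Real.sqrt g21 +
      Real.sqrt g10' * Real.sqrt g21' * Real.sqrt (1 - g10) * Real.sqrt (1 - g21 - g20) =
    Real.sqrt (g10 + g10' * (1 - g10)) *
      Real.sqrt ((1 - g10') * g21 + g21' * (1 - g21 - g20)) := by
  have h1g10 : (0:ℝ) ≤ 1 - g10 := by linarith
  have h1g10p : (0:ℝ) ≤ 1 - g10' := by linarith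
  have h2 : (0:ℝ) ≤ 1 - g21 - g20 := by linarith
  have hA0 : 0 ≤ g10 + g10' * (1 - g10) := by nlinarith
  have hPnn : 0 ≤ (1 - g10') * g10 * g21 :=
    mul_nonneg (mul_nonneg h1g10p h10) h21
  have hQnn : 0 ≤ g10' * g21' * (1 - g10) * (1 - g21 - g20) :=
    mul_nonneg (mul_nonneg (mul_nonneg h10p h21p) h1g10) h2
  have hXnn : 0 ≤ g10 * g21' * (1 - g21 - g20) :=
    mul_nonneg (mul_nonneg h10 h21p) h2
  have e1 : Real.sqrt (1 - g10') * Real.sqrt g10 * Real.sqrt g21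
      = Real.sqrt ((1 - g10') * g10 * g21) := by
    rw [Real.sqrt_mul (mul_nonneg h1g10p h10) g21, Real.sqrt_mul h1g10p g10]
  have e2 : Real.sqrt g10' * Real.sqrt g21' * Real.sqrt (1 - g10) * Real.sqrt (1 - g21 - g20)
      = Real.sqrt (g10' * g21' * (1 - g10) * (1 - g21 - g20)) := by
    rw [Real.sqrt_mul (mul_nonneg (mul_nonneg h10p h21p) h1g10) (1 - g21 - g20),
      Real.sqrt_mul (mul_nonneg h10p h21p) (1 - g10), Real.sqrt_mul h10p g21']
  have e3 : Real.sqrt (g10 + g10' * (1 - g10)) *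
      Real.sqrt ((1 - g10') * g21 + g21' * (1 - g21 - g20))
      = Real.sqrt ((g10 + g10' * (1 - g10)) * ((1 - g10') * g21 + g21' * (1 - g21 - g20))) :=
    (Real.sqrt_mul hA0 _).symm
  have hpq : Real.sqrt ((1 - g10') * g10 * g21) *
      Real.sqrt (g10' * g21' * (1 - g10) * (1 - g21 - g20))
      = g10 * g21' * (1 - g21 - g20) := by
    rw [← Real.sqrt_mul hPnn]
    rw [show (1 - g10') * g10 * g21 * (g10' * g21' * (1 - g10) * (1 - g21 - g20))
        = (g10 * g21' * (1 - g21 - g20)) * (g10 * g21' * (1 - g21 - g20)) by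
      linear_combination (-(g10 * g21' * (1 - g21 - g20))) * hcon]
    exact Real.sqrt_mul_self hXnn
  have mP := Real.mul_self_sqrt hPnn
  have mQ := Real.mul_self_sqrt hQnn
  have hsq : (g10 + g10' * (1 - g10)) * ((1 - g10') * g21 + g21' * (1 - g21 - g20))
      = (Real.sqrt ((1 - g10') * g10 * g21) +
         Real.sqrt (g10' * g21' * (1 - g10) * (1 - g21 - g20)))^2 := by
    linear_combination -mP - mQ - 2 * hpq - hcon
  rw [e1, e2, e3, hsq, Real.sqrt_sq (by positivity)]

set_option maxHeartbeats 2000000 in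
/-- With the compatibility constraint, the composite of two ReMAD channels is the
explicit ReMAD channel. -/
lemma remad_comp (g10 g21 g20 g10' g21' g20' : ℝ)
    (h10 : 0 ≤ g10) (h10' : g10 ≤ 1) (h21 : 0 ≤ g21)
    (h20 : 0 ≤ g20) (hsum : g21 + g20 ≤ 1)
    (h10p : 0 ≤ g10') (h10p' : g10' ≤ 1) (h21p : 0 ≤ g21')
    (h20p : 0 ≤ g20') (hsump : g21' + g20' ≤ 1)
    (hcon : g10 * g21' * (1 - g21 - g20) = g21 * g10' * (1 - g10) * (1 - g10'))
    (ρ : Matrix (Fin 3) (Fin 3) ℂ) :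
    Phi g10' g21' g20' (Phi g10 g21 g20 ρ) =
      Phi (g10 + g10' * (1 - g10))
        ((1 - g10') * g21 + g21' * (1 - g21 - g20))
        (g20 + g10' * g21 + g20' * (1 - g21 - g20)) ρ := by
  have h1g10 : (0:ℝ) ≤ 1 - g10 := by linarith
  have h1g10p : (0:ℝ) ≤ 1 - g10' := by linarith
  have h2 : (0:ℝ) ≤ 1 - g21 - g20 := by linarith
  have h2p : (0:ℝ) ≤ 1 - g21' - g20' := by linarith
  have hA0 : 0 ≤ g10 + g10' * (1 - g10) := by nlinarith
  have hB0 : 0 ≤ (1 - g10') * g21 + g21' * (1 - g21 - g20) := by nlinarith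
  have hC0 : 0 ≤ g20 + g10' * g21 + g20' * (1 - g21 - g20) := by nlinarith
  -- squared-root multiplication facts, in ℂ
  have S1 : ((Real.sqrt g10 : ℝ) : ℂ) * ((Real.sqrt g10 : ℝ) : ℂ) = (g10 : ℂ) := by
    exact_mod_cast Real.mul_self_sqrt h10
  have S2 : ((Real.sqrt g21 : ℝ) : ℂ) * ((Real.sqrt g21 : ℝ) : ℂ) = (g21 : ℂ) := by
    exact_mod_cast Real.mul_self_sqrt h21
  have S3 : ((Real.sqrt g20 : ℝ) : ℂ) * ((Real.sqrt g20 : ℝ) : ℂ) = (g20 : ℂ) := by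
    exact_mod_cast Real.mul_self_sqrt h20
  have S4 : ((Real.sqrt g10' : ℝ) : ℂ) * ((Real.sqrt g10' : ℝ) : ℂ) = (g10' : ℂ) := by
    exact_mod_cast Real.mul_self_sqrt h10p
  have S5 : ((Real.sqrt g21' : ℝ) : ℂ) * ((Real.sqrt g21' : ℝ) : ℂ) = (g21' : ℂ) := by
    exact_mod_cast Real.mul_self_sqrt h21p
  have S6 : ((Real.sqrt g20' : ℝ) : ℂ) * ((Real.sqrt g20' : ℝ) : ℂ) = (g20' : ℂ) := by
    exact_mod_cast Real.mul_self_sqrt h20p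
  have S7 : ((Real.sqrt (1 - g10) : ℝ) : ℂ) * ((Real.sqrt (1 - g10) : ℝ) : ℂ)
      = 1 - (g10 : ℂ) := by exact_mod_cast Real.mul_self_sqrt h1g10
  have S8 : ((Real.sqrt (1 - g21 - g20) : ℝ) : ℂ) * ((Real.sqrt (1 - g21 - g20) : ℝ) : ℂ)
      = 1 - (g21 : ℂ) - (g20 : ℂ) := by exact_mod_cast Real.mul_self_sqrt h2
  have S9 : ((Real.sqrt (1 - g10') : ℝ) : ℂ) * ((Real.sqrt (1 - g10') : ℝ) : ℂ)
      = 1 - (g10' : ℂ) := by exact_mod_cast Real.mul_self_sqrt h1g10p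
  have SA : ((Real.sqrt (g10 + g10' * (1 - g10)) : ℝ) : ℂ) *
      ((Real.sqrt (g10 + g10' * (1 - g10)) : ℝ) : ℂ)
      = (g10 : ℂ) + (g10' : ℂ) * (1 - (g10 : ℂ)) := by
    exact_mod_cast Real.mul_self_sqrt hA0
  have SB : ((Real.sqrt ((1 - g10') * g21 + g21' * (1 - g21 - g20)) : ℝ) : ℂ) *
      ((Real.sqrt ((1 - g10') * g21 + g21' * (1 - g21 - g20)) : ℝ) : ℂ)
      = (1 - (g10' : ℂ)) * (g21 : ℂ) + (g21' : ℂ) * (1 - (g21 : ℂ) - (g20 : ℂ)) := by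
    exact_mod_cast Real.mul_self_sqrt hB0
  have SC : ((Real.sqrt (g20 + g10' * g21 + g20' * (1 - g21 - g20)) : ℝ) : ℂ) *
      ((Real.sqrt (g20 + g10' * g21 + g20' * (1 - g21 - g20)) : ℝ) : ℂ)
      = (g20 : ℂ) + (g10' : ℂ) * (g21 : ℂ) + (g20' : ℂ) * (1 - (g21 : ℂ) - (g20 : ℂ)) := by
    exact_mod_cast Real.mul_self_sqrt hC0
  -- cross identities
  have C1 : ((Real.sqrt (1 - g10') : ℝ) : ℂ) * ((Real.sqrt (1 - g10) : ℝ) : ℂ)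
      = ((Real.sqrt (1 - (g10 + g10' * (1 - g10))) : ℝ) : ℂ) := by
    rw [← Complex.ofReal_mul, ← Real.sqrt_mul h1g10p,
      show (1 - g10') * (1 - g10) = 1 - (g10 + g10' * (1 - g10)) by ring]
  have C2 : ((Real.sqrt (1 - g21' - g20') : ℝ) : ℂ) * ((Real.sqrt (1 - g21 - g20) : ℝ) : ℂ)
      = ((Real.sqrt (1 - ((1 - g10') * g21 + g21' * (1 - g21 - g20)) -
          (g20 + g10' * g21 + g20' * (1 - g21 - g20))) : ℝ) : ℂ) := by
    rw [← Complex.ofReal_mul, ← Real.sqrt_mul h2p,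
      show (1 - g21' - g20') * (1 - g21 - g20)
        = 1 - ((1 - g10') * g21 + g21' * (1 - g21 - g20)) -
          (g20 + g10' * g21 + g20' * (1 - g21 - g20)) by ring]
  have C3 : ((Real.sqrt (1 - g10') : ℝ) : ℂ) * ((Real.sqrt g10 : ℝ) : ℂ) *
        ((Real.sqrt g21 : ℝ) : ℂ) +
      ((Real.sqrt g10' : ℝ) : ℂ) * ((Real.sqrt g21' : ℝ) : ℂ) *
        ((Real.sqrt (1 - g10) : ℝ) : ℂ) * ((Real.sqrt (1 - g21 - g20) : ℝ) : ℂ)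
      = ((Real.sqrt (g10 + g10' * (1 - g10)) : ℝ) : ℂ) *
        ((Real.sqrt ((1 - g10') * g21 + g21' * (1 - g21 - g20)) : ℝ) : ℂ) := by
    exact_mod_cast remad_key g10 g21 g20 g10' g21' g20'
      h10 h10' h21 h20 hsum h10p h10p' h21p hcon
  -- coefficient identities for the diagonal entries
  have k00a : ((Real.sqrt g10 : ℝ) : ℂ) * ((Real.sqrt g10 : ℝ) : ℂ) +
      ((Real.sqrt g10' : ℝ) : ℂ) * ((Real.sqrt (1 - g10) : ℝ) : ℂ) *
        ((Real.sqrt (1 - g10) : ℝ) : ℂ) * ((Real.sqrt g10' : ℝ) : ℂ)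
      = ((Real.sqrt (g10 + g10' * (1 - g10)) : ℝ) : ℂ) *
        ((Real.sqrt (g10 + g10' * (1 - g10)) : ℝ) : ℂ) := by
    linear_combination S1 + ((Real.sqrt (1 - g10) : ℝ) : ℂ) *
      ((Real.sqrt (1 - g10) : ℝ) : ℂ) * S4 + (g10' : ℂ) * S7 - SA
  have k00b : ((Real.sqrt g20 : ℝ) : ℂ) * ((Real.sqrt g20 : ℝ) : ℂ) +
      ((Real.sqrt g10' : ℝ) : ℂ) * ((Real.sqrt g21 : ℝ) : ℂ) *
        ((Real.sqrt g21 : ℝ) : ℂ) * ((Real.sqrt g10' : ℝ) : ℂ) +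
      ((Real.sqrt g20' : ℝ) : ℂ) * ((Real.sqrt (1 - g21 - g20) : ℝ) : ℂ) *
        ((Real.sqrt (1 - g21 - g20) : ℝ) : ℂ) * ((Real.sqrt g20' : ℝ) : ℂ)
      = ((Real.sqrt (g20 + g10' * g21 + g20' * (1 - g21 - g20)) : ℝ) : ℂ) *
        ((Real.sqrt (g20 + g10' * g21 + g20' * (1 - g21 - g20)) : ℝ) : ℂ) := by
    linear_combination S3 + ((Real.sqrt g21 : ℝ) : ℂ) * ((Real.sqrt g21 : ℝ) : ℂ) * S4 +
      (g10' : ℂ) * S2 + ((Real.sqrt (1 - g21 - g20) : ℝ) : ℂ) *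
      ((Real.sqrt (1 - g21 - g20) : ℝ) : ℂ) * S6 + (g20' : ℂ) * S8 - SC
  have k11b : ((Real.sqrt (1 - g10') : ℝ) : ℂ) * ((Real.sqrt g21 : ℝ) : ℂ) *
        ((Real.sqrt g21 : ℝ) : ℂ) * ((Real.sqrt (1 - g10') : ℝ) : ℂ) +
      ((Real.sqrt g21' : ℝ) : ℂ) * ((Real.sqrt (1 - g21 - g20) : ℝ) : ℂ) *
        ((Real.sqrt (1 - g21 - g20) : ℝ) : ℂ) * ((Real.sqrt g21' : ℝ) : ℂ)
      = ((Real.sqrt ((1 - g10') * g21 + g21' * (1 - g21 - g20)) : ℝ) : ℂ) *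
        ((Real.sqrt ((1 - g10') * g21 + g21' * (1 - g21 - g20)) : ℝ) : ℂ) := by
    linear_combination ((Real.sqrt g21 : ℝ) : ℂ) * ((Real.sqrt g21 : ℝ) : ℂ) * S9 +
      (1 - (g10' : ℂ)) * S2 + ((Real.sqrt (1 - g21 - g20) : ℝ) : ℂ) *
      ((Real.sqrt (1 - g21 - g20) : ℝ) : ℂ) * S5 + (g21' : ℂ) * S8 - SB
  ext i j
  fin_cases i <;> fin_cases j <;>
  · simp only [Phi, Matrix.add_apply, Matrix.mul_apply, Fin.sum_univ_three,
      Matrix.conjTranspose_apply, K0, K1, K2, Matrix.cons_val', Matrix.cons_val_zero,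
      Matrix.cons_val_one, Matrix.head_cons, Matrix.empty_val', Matrix.cons_val_fin_one,
      Matrix.head_fin_const, Matrix.cons_val_two, Matrix.tail_cons, Matrix.of_apply,
      Fin.zero_eta, Fin.mk_one, Fin.reduceFinMk,
      Complex.star_def, Complex.conj_ofReal, _root_.map_one, _root_.map_zero, one_mul, zero_mul,
      mul_zero, mul_one, add_zero, zero_add, Fin.isValue]
    first
    | linear_combination k00a * ρ 1 1 + k00b * ρ 2 2
    | linear_combination C1 * ρ 0 1 + C3 * ρ 1 2
    | linear_combination C2 * ρ 0 2
    | linear_combination C1 * ρ 1 0 + C3 * ρ 2 1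
    | linear_combination (((Real.sqrt (1 - g10') : ℝ) : ℂ) * ((Real.sqrt (1 - g10) : ℝ) : ℂ) +
        ((Real.sqrt (1 - (g10 + g10' * (1 - g10))) : ℝ) : ℂ)) * C1 * ρ 1 1 + k11b * ρ 2 2
    | linear_combination (((Real.sqrt (1 - g21' - g20') : ℝ) : ℂ) *
        ((Real.sqrt (1 - g21 - g20) : ℝ) : ℂ)) * C1 * ρ 1 2 +
        ((Real.sqrt (1 - (g10 + g10' * (1 - g10))) : ℝ) : ℂ) * C2 * ρ 1 2
    | linear_combination C2 * ρ 2 0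
    | linear_combination (((Real.sqrt (1 - g21' - g20') : ℝ) : ℂ) *
        ((Real.sqrt (1 - g21 - g20) : ℝ) : ℂ)) * C1 * ρ 2 1 +
        ((Real.sqrt (1 - (g10 + g10' * (1 - g10))) : ℝ) : ℂ) * C2 * ρ 2 1
    | linear_combination (((Real.sqrt (1 - g21' - g20') : ℝ) : ℂ) *
        ((Real.sqrt (1 - g21 - g20) : ℝ) : ℂ) +
        ((Real.sqrt (1 - ((1 - g10') * g21 + g21' * (1 - g21 - g20)) -
          (g20 + g10' * g21 + g20' * (1 - g21 - g20))) : ℝ) : ℂ)) * C2 * ρ 2 2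

set_option maxHeartbeats 2000000 in
/-- The composition `Φ_{Γ'} ∘ Φ_Γ` of two qutrit ReMAD channels is again a ReMAD channel
if and only if `γ₁₀ γ'₂₁ (1-γ₂₁-γ₂₀) = γ₂₁ γ'₁₀ (1-γ₁₀)(1-γ'₁₀)`; in that case the
composite is `Φ_{Γ''}` with
`γ''₁₀ = γ₁₀ + γ'₁₀(1-γ₁₀)`,
`γ''₂₀ = γ₂₀ + γ'₁₀γ₂₁ + γ'₂₀(1-γ₂₁-γ₂₀)`,
`γ''₂₁ = (1-γ'₁₀)γ₂₁ + γ'₂₁(1-γ₂₁-γ₂₀)`. -/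
theorem qutrit_remad_composition (g10 g21 g20 g10' g21' g20' : ℝ)
    (h10 : 0 ≤ g10) (h10' : g10 ≤ 1) (h21 : 0 ≤ g21) (h21' : g21 ≤ 1)
    (h20 : 0 ≤ g20) (h20' : g20 ≤ 1) (hsum : g21 + g20 ≤ 1)
    (h10p : 0 ≤ g10') (h10p' : g10' ≤ 1) (h21p : 0 ≤ g21') (h21p' : g21' ≤ 1)
    (h20p : 0 ≤ g20') (h20p' : g20' ≤ 1) (hsump : g21' + g20' ≤ 1) :
    ((∃ a b c : ℝ, 0 ≤ a ∧ a ≤ 1 ∧ 0 ≤ b ∧ b ≤ 1 ∧ 0 ≤ c ∧ c ≤ 1 ∧ b + c ≤ 1 ∧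
        ∀ ρ : Matrix (Fin 3) (Fin 3) ℂ,
          Phi g10' g21' g20' (Phi g10 g21 g20 ρ) = Phi a b c ρ) ↔
      g10 * g21' * (1 - g21 - g20) = g21 * g10' * (1 - g10) * (1 - g10')) ∧
    (g10 * g21' * (1 - g21 - g20) = g21 * g10' * (1 - g10) * (1 - g10') →
      ∀ ρ : Matrix (Fin 3) (Fin 3) ℂ,
        Phi g10' g21' g20' (Phi g10 g21 g20 ρ) =
          Phi (g10 + g10' * (1 - g10))
            ((1 - g10') * g21 + g21' * (1 - g21 - g20))
            (g20 + g10' * g21 + g20' * (1 - g21 - g20)) ρ) := by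
  have h1g10 : (0:ℝ) ≤ 1 - g10 := by linarith
  have h1g10p : (0:ℝ) ≤ 1 - g10' := by linarith
  have h2 : (0:ℝ) ≤ 1 - g21 - g20 := by linarith
  have h2p : (0:ℝ) ≤ 1 - g21' - g20' := by linarith
  have hcomp := remad_comp g10 g21 g20 g10' g21' g20'
    h10 h10' h21 h20 hsum h10p h10p' h21p h20p hsump
  refine ⟨⟨fun ⟨a, b, c, ha0, ha1, hb0, hb1, hc0, hc1, hbc, hρ⟩ => ?_, fun hcon => ?_⟩,
    fun hcon ρ => hcomp hcon ρ⟩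
  · -- forward: extract scalar equations from the channel identity
    have h1 := congrFun (congrFun (hρ !![(0:ℂ),0,0;0,1,0;0,0,0]) 0) 0
    have h2c := congrFun (congrFun (hρ !![(0:ℂ),0,0;0,0,0;0,0,1]) 1) 1
    have h3 := congrFun (congrFun (hρ !![(0:ℂ),0,0;0,0,1;0,0,0]) 0) 1
    simp only [Phi, Matrix.add_apply, Matrix.mul_apply, Fin.sum_univ_three,
      Matrix.conjTranspose_apply, K0, K1, K2, Matrix.cons_val', Matrix.cons_val_zero,
      Matrix.cons_val_one, Matrix.head_cons, Matrix.empty_val', Matrix.cons_val_fin_one,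
      Matrix.head_fin_const, Matrix.cons_val_two, Matrix.tail_cons, Matrix.of_apply,
      Fin.zero_eta, Fin.mk_one, Fin.reduceFinMk,
      Complex.star_def, Complex.conj_ofReal, _root_.map_one, _root_.map_zero, one_mul,
      zero_mul, mul_zero, mul_one, add_zero, zero_add, Fin.isValue] at h1 h2c h3
    have h1r : Real.sqrt g10 * Real.sqrt g10 +
        Real.sqrt g10' * (Real.sqrt (1 - g10) * Real.sqrt (1 - g10)) * Real.sqrt g10'
        = Real.sqrt a * Real.sqrt a := by exact_mod_cast h1
    have h2r : Real.sqrt (1 - g10') * (Real.sqrt g21 * Real.sqrt g21) * Real.sqrt (1 - g10') +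
        Real.sqrt g21' * (Real.sqrt (1 - g21 - g20) * Real.sqrt (1 - g21 - g20)) *
          Real.sqrt g21'
        = Real.sqrt b * Real.sqrt b := by exact_mod_cast h2c
    have h3r : Real.sqrt g10 * Real.sqrt g21 * Real.sqrt (1 - g10') +
        Real.sqrt g10' * (Real.sqrt (1 - g10) * Real.sqrt (1 - g21 - g20)) * Real.sqrt g21'
        = Real.sqrt a * Real.sqrt b := by exact_mod_cast h3
    -- basic square facts
    have m10 := Real.mul_self_sqrt h10
    have m2 := Real.mul_self_sqrt h21
    have m5 := Real.mul_self_sqrt h21p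
    have m10p := Real.mul_self_sqrt h10p
    have m7 := Real.mul_self_sqrt h1g10
    have m8 := Real.mul_self_sqrt h2
    have m9 := Real.mul_self_sqrt h1g10p
    have ma := Real.mul_self_sqrt ha0
    have mb := Real.mul_self_sqrt hb0
    have ea : g10 + g10' * (1 - g10) = a := by
      linear_combination h1r - m10 -
        (Real.sqrt (1 - g10) * Real.sqrt (1 - g10)) * m10p - g10' * m7 + ma
    have eb : (1 - g10') * g21 + g21' * (1 - g21 - g20) = b := by
      linear_combination h2r - (Real.sqrt g21 * Real.sqrt g21) * m9 - (1 - g10') * m2 -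
        (Real.sqrt (1 - g21 - g20) * Real.sqrt (1 - g21 - g20)) * m5 - g21' * m8 + mb
    -- turn h3r into an equation about sqrt of products
    have hPnn : 0 ≤ (1 - g10') * g10 * g21 := mul_nonneg (mul_nonneg h1g10p h10) h21
    have hQnn : 0 ≤ g10' * g21' * (1 - g10) * (1 - g21 - g20) :=
      mul_nonneg (mul_nonneg (mul_nonneg h10p h21p) h1g10) h2
    have hXnn : 0 ≤ g10 * g21' * (1 - g21 - g20) := mul_nonneg (mul_nonneg h10 h21p) h2
    have hYnn : 0 ≤ g21 * g10' * (1 - g10) * (1 - g10') :=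
      mul_nonneg (mul_nonneg (mul_nonneg h21 h10p) h1g10) h1g10p
    have e1 : Real.sqrt (1 - g10') * Real.sqrt g10 * Real.sqrt g21
        = Real.sqrt ((1 - g10') * g10 * g21) := by
      rw [Real.sqrt_mul (mul_nonneg h1g10p h10) g21, Real.sqrt_mul h1g10p g10]
    have e2 : Real.sqrt g10' * Real.sqrt g21' * Real.sqrt (1 - g10) *
          Real.sqrt (1 - g21 - g20)
        = Real.sqrt (g10' * g21' * (1 - g10) * (1 - g21 - g20)) := by
      rw [Real.sqrt_mul (mul_nonneg (mul_nonneg h10p h21p) h1g10) (1 - g21 - g20),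
        Real.sqrt_mul (mul_nonneg h10p h21p) (1 - g10), Real.sqrt_mul h10p g21']
    have ek : Real.sqrt ((1 - g10') * g10 * g21) +
        Real.sqrt (g10' * g21' * (1 - g10) * (1 - g21 - g20))
        = Real.sqrt a * Real.sqrt b := by
      linear_combination h3r - e1 - e2
    have hsq : (Real.sqrt ((1 - g10') * g10 * g21) +
        Real.sqrt (g10' * g21' * (1 - g10) * (1 - g21 - g20)))^2 = a * b := by
      rw [ek, mul_pow, Real.sq_sqrt ha0, Real.sq_sqrt hb0]
    have hpq : Real.sqrt ((1 - g10') * g10 * g21) *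
        Real.sqrt (g10' * g21' * (1 - g10) * (1 - g21 - g20))
        = Real.sqrt (g10 * g21' * (1 - g21 - g20)) *
          Real.sqrt (g21 * g10' * (1 - g10) * (1 - g10')) := by
      rw [← Real.sqrt_mul hPnn, ← Real.sqrt_mul hXnn]
      congr 1
      ring
    have mP := Real.mul_self_sqrt hPnn
    have mQ := Real.mul_self_sqrt hQnn
    have mX := Real.mul_self_sqrt hXnn
    have mY := Real.mul_self_sqrt hYnn
    have h4 : (Real.sqrt (g10 * g21' * (1 - g21 - g20)) -
        Real.sqrt (g21 * g10' * (1 - g10) * (1 - g10')))^2 = 0 := by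
      linear_combination mX + mY + 2 * hpq - hsq + mP + mQ + b * ea +
        (g10 + g10' * (1 - g10)) * eb
    have h5 : Real.sqrt (g10 * g21' * (1 - g21 - g20))
        = Real.sqrt (g21 * g10' * (1 - g10) * (1 - g10')) :=
      sub_eq_zero.mp (pow_eq_zero_iff two_ne_zero |>.mp h4)
    linear_combination (Real.sqrt (g10 * g21' * (1 - g21 - g20)) +
      Real.sqrt (g21 * g10' * (1 - g10) * (1 - g10'))) * h5 - mX + mY
  · -- backward: the explicit parameters work
    refine ⟨g10 + g10' * (1 - g10), (1 - g10') * g21 + g21' * (1 - g21 - g20),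
      g20 + g10' * g21 + g20' * (1 - g21 - g20), by nlinarith, by nlinarith, by nlinarith,
      by nlinarith, by nlinarith, by nlinarith, by nlinarith, fun ρ => hcomp hcon ρ⟩
end

section
/- The composite parameters γ''_{10} = γ_{10} + γ'_{10}(1-γ_{10}), γ''_{20} = γ_{20} + γ'_{10}γ_{21} + γ'_{20}(1-γ_{21}-γ_{20}), γ''_{21} = (1-γ'_{10})γ_{21} + γ'_{21}(1-γ_{21}-γ_{20}) lie in the valid qutrit parameter domain: γ''_{10}, γ''_{21}, γ''_{20} ∈ [0,1] and γ''_{21} + γ''_{20} ≤ 1, whenever both (γ_{10},γ_{21},γ_{20}) and (γ'_{10},γ'_{21},γ'_{20}) do. -/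
/-- The composite qutrit ReMAD parameters
`γ''₁₀ = γ₁₀ + γ'₁₀(1-γ₁₀)`, `γ''₂₀ = γ₂₀ + γ'₁₀γ₂₁ + γ'₂₀(1-γ₂₁-γ₂₀)`,
`γ''₂₁ = (1-γ'₁₀)γ₂₁ + γ'₂₁(1-γ₂₁-γ₂₀)` lie in the valid qutrit parameter domain
`D₃ = {(γ₁₀,γ₂₁,γ₂₀) ∈ [0,1]³ : γ₂₁ + γ₂₀ ≤ 1}` whenever both input parameter
triples do. -/
theorem composite_params_in_domain (g10 g21 g20 g10' g21' g20' : ℝ)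
    (h10 : 0 ≤ g10) (h10' : g10 ≤ 1) (h21 : 0 ≤ g21) (h21' : g21 ≤ 1)
    (h20 : 0 ≤ g20) (h20' : g20 ≤ 1) (hsum : g21 + g20 ≤ 1)
    (h10p : 0 ≤ g10') (h10p' : g10' ≤ 1) (h21p : 0 ≤ g21') (h21p' : g21' ≤ 1)
    (h20p : 0 ≤ g20') (h20p' : g20' ≤ 1) (hsump : g21' + g20' ≤ 1) :
    0 ≤ g10 + g10' * (1 - g10) ∧ g10 + g10' * (1 - g10) ≤ 1 ∧
      0 ≤ (1 - g10') * g21 + g21' * (1 - g21 - g20) ∧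
      (1 - g10') * g21 + g21' * (1 - g21 - g20) ≤ 1 ∧
      0 ≤ g20 + g10' * g21 + g20' * (1 - g21 - g20) ∧
      g20 + g10' * g21 + g20' * (1 - g21 - g20) ≤ 1 ∧
      ((1 - g10') * g21 + g21' * (1 - g21 - g20)) +
        (g20 + g10' * g21 + g20' * (1 - g21 - g20)) ≤ 1 := by
  refine ⟨by nlinarith, by nlinarith, by nlinarith, by nlinarith, by nlinarith, by nlinarith, by nlinarith⟩
end

section
/- For a qutrit ReMAD channel with γ_{10} < 1 and γ_{21} + γ_{20} < 1, the linear map Φ_Γ^{-1} given explicitly by the stated matrix formula is a two-sided inverse of Φ_Γ: Φ_Γ(Φ_Γ^{-1}(ρ)) = ρ = Φ_Γ^{-1}(Φ_Γ(ρ)) for all ρ ∈ M_3(ℂ). -/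
open Matrix
/-- The explicit inverse map of the qutrit ReMAD channel (Eq. (channel action INV)),
with conjugate-symmetric lower entries. -/
noncomputable def PhiInv (g10 g21 g20 : ℝ) (ρ : Matrix (Fin 3) (Fin 3) ℂ) :
    Matrix (Fin 3) (Fin 3) ℂ :=
  !![ρ 0 0 - ((g10 / (1 - g10) : ℝ) : ℂ) * ρ 1 1 +
       (((g10 * g21 - g20 * (1 - g10)) / ((1 - g10) * (1 - g21 - g20)) : ℝ) : ℂ) * ρ 2 2,
     ρ 0 1 / ((Real.sqrt (1 - g10) : ℝ) : ℂ) -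
       ((Real.sqrt (g10 * g21) : ℝ) : ℂ) * ρ 1 2 /
         (((1 - g10 : ℝ) : ℂ) * ((Real.sqrt (1 - g21 - g20) : ℝ) : ℂ)),
     ρ 0 2 / ((Real.sqrt (1 - g21 - g20) : ℝ) : ℂ);
     ρ 1 0 / ((Real.sqrt (1 - g10) : ℝ) : ℂ) -
       ((Real.sqrt (g10 * g21) : ℝ) : ℂ) * ρ 2 1 /
         (((1 - g10 : ℝ) : ℂ) * ((Real.sqrt (1 - g21 - g20) : ℝ) : ℂ)),
     ρ 1 1 / ((1 - g10 : ℝ) : ℂ) -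
       ((g21 : ℝ) : ℂ) * ρ 2 2 / (((1 - g10) * (1 - g21 - g20) : ℝ) : ℂ),
     ρ 1 2 / ((Real.sqrt ((1 - g10) * (1 - g21 - g20)) : ℝ) : ℂ);
     ρ 2 0 / ((Real.sqrt (1 - g21 - g20) : ℝ) : ℂ),
     ρ 2 1 / ((Real.sqrt ((1 - g10) * (1 - g21 - g20)) : ℝ) : ℂ),
     ρ 2 2 / ((1 - g21 - g20 : ℝ) : ℂ)]

set_option maxHeartbeats 2000000 in
/-- For `γ₁₀ < 1` and `γ₂₁ + γ₂₀ < 1`, the explicit map `Φ_Γ⁻¹` is a two-sided inverse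
of the qutrit ReMAD channel `Φ_Γ`. -/
theorem qutrit_remad_inverse (g10 g21 g20 : ℝ)
    (h10 : 0 ≤ g10) (h10' : g10 < 1) (h21 : 0 ≤ g21) (h21' : g21 < 1)
    (h20 : 0 ≤ g20) (h20' : g20 < 1) (hsum : g21 + g20 < 1)
    (ρ : Matrix (Fin 3) (Fin 3) ℂ) :
    Phi g10 g21 g20 (PhiInv g10 g21 g20 ρ) = ρ ∧
      PhiInv g10 g21 g20 (Phi g10 g21 g20 ρ) = ρ := by
  have ha : (0:ℝ) < 1 - g10 := by linarith
  have hb : (0:ℝ) < 1 - g21 - g20 := by linarith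
  simp only [Phi, PhiInv, K0, K1, K2, Real.sqrt_mul h10, Real.sqrt_mul ha.le]
  generalize hx : Real.sqrt (1 - g10) = x
  generalize hy : Real.sqrt (1 - g21 - g20) = y
  generalize hp : Real.sqrt g10 = p
  generalize hq : Real.sqrt g21 = q
  generalize hr : Real.sqrt g20 = r
  have hx0 : ((x:ℝ):ℂ) ≠ 0 := by
    subst hx; simp [Complex.ofReal_eq_zero, Real.sqrt_eq_zero ha.le]; positivity
  have hy0 : ((y:ℝ):ℂ) ≠ 0 := by
    subst hy; simp [Complex.ofReal_eq_zero, Real.sqrt_eq_zero hb.le]; positivity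
  have ex : (1 - g10 : ℝ) = x^2 := by rw [← hx, Real.sq_sqrt ha.le]
  have ey : (1 - g21 - g20 : ℝ) = y^2 := by rw [← hy, Real.sq_sqrt hb.le]
  have ep : (g10 : ℝ) = p^2 := by rw [← hp, Real.sq_sqrt h10]
  have eq' : (g21 : ℝ) = q^2 := by rw [← hq, Real.sq_sqrt h21]
  have er : (g20 : ℝ) = r^2 := by rw [← hr, Real.sq_sqrt h20]
  rw [ex, ey, ep, eq', er]
  constructor <;>
  · ext i j
    fin_cases i <;> fin_cases j <;>
    · simp [Matrix.mul_apply, Matrix.conjTranspose_apply, Fin.sum_univ_three, Matrix.vecMul, dotProduct, Matrix.vecHead, Matrix.vecTail, Function.comp]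
      all_goals try push_cast
      all_goals try field_simp [hx0, hy0]
      all_goals ring
end

section
/- The Liouville (vectorization) representation matrix M_Φ = Σ_i K^{(i)} ⊗ K^{(i)*} of a qutrit ReMAD channel, in the ordered basis {ρ_{00},ρ_{01},ρ_{02},ρ_{10},ρ_{11},ρ_{12},ρ_{20},ρ_{21},ρ_{22}}, is upper triangular with diagonal entries 1, √(1-γ_{10}), √(1-γ_{21}-γ_{20}), √(1-γ_{10}), 1-γ_{10}, √((1-γ_{10})(1-γ_{21}-γ_{20})), √(1-γ_{21}-γ_{20}), √((1-γ_{10})(1-γ_{21}-γ_{20})), 1-γ_{21}-γ_{20}; consequently M_Φ is invertible if and only if γ_{10} ≠ 1 and γ_{21} + γ_{20} ≠ 1. -/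
open Matrix
open scoped BigOperators
/-- The Liouville (vectorization) representation matrix
`M_Φ = Σ_i K^{(i)} ⊗ (K^{(i)})^*` of the qutrit ReMAD channel, indexed by pairs
`(i,j)` corresponding to the ordered basis `{ρ₀₀,ρ₀₁,ρ₀₂,ρ₁₀,…,ρ₂₂}`:
`M_Φ (i,j) (k,l) = Σ_s K^{(s)}_{ik} · conj(K^{(s)}_{jl})`. -/
noncomputable def MPhi (g10 g21 g20 : ℝ) :
    Matrix (Fin 3 × Fin 3) (Fin 3 × Fin 3) ℂ :=
  Matrix.of fun p q =>
    ∑ s : Fin 3,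
      (![K0 g10 g21 g20, K1 g10 g21, K2 g20] s) p.1 q.1 *
        star ((![K0 g10 g21 g20, K1 g10 g21, K2 g20] s) p.2 q.2)

lemma MPhi_apply' (g10 g21 g20 : ℝ) (p q : Fin 3 × Fin 3) :
    MPhi g10 g21 g20 p q =
      K0 g10 g21 g20 p.1 q.1 * star (K0 g10 g21 g20 p.2 q.2) +
      K1 g10 g21 p.1 q.1 * star (K1 g10 g21 p.2 q.2) +
      K2 g20 p.1 q.1 * star (K2 g20 p.2 q.2) := by
  simp [MPhi, Fin.sum_univ_three]

set_option maxHeartbeats 1000000 in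
/-- In the ordered (lexicographic) basis `{ρ₀₀,ρ₀₁,ρ₀₂,ρ₁₀,ρ₁₁,ρ₁₂,ρ₂₀,ρ₂₁,ρ₂₂}`,
`M_Φ` is upper triangular with diagonal entries
`1, √(1-γ₁₀), √(1-γ₂₁-γ₂₀), √(1-γ₁₀), 1-γ₁₀, √((1-γ₁₀)(1-γ₂₁-γ₂₀)), √(1-γ₂₁-γ₂₀),
√((1-γ₁₀)(1-γ₂₁-γ₂₀)), 1-γ₂₁-γ₂₀` (i.e. `d_i · d_j` with
`d = (1, √(1-γ₁₀), √(1-γ₂₁-γ₂₀))`); consequently `M_Φ` is invertible iff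
`γ₁₀ ≠ 1` and `γ₂₁ + γ₂₀ ≠ 1`. -/
theorem qutrit_remad_liouville (g10 g21 g20 : ℝ)
    (h10 : 0 ≤ g10) (h10' : g10 ≤ 1) (h21 : 0 ≤ g21) (h21' : g21 ≤ 1)
    (h20 : 0 ≤ g20) (h20' : g20 ≤ 1) (hsum : g21 + g20 ≤ 1) :
    (∀ p q : Fin 3 × Fin 3, (q.1 < p.1 ∨ (q.1 = p.1 ∧ q.2 < p.2)) →
        MPhi g10 g21 g20 p q = 0) ∧
      (∀ p : Fin 3 × Fin 3,
        MPhi g10 g21 g20 p p =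
          (![(1 : ℂ), ((Real.sqrt (1 - g10) : ℝ) : ℂ),
              ((Real.sqrt (1 - g21 - g20) : ℝ) : ℂ)] p.1) *
            (![(1 : ℂ), ((Real.sqrt (1 - g10) : ℝ) : ℂ),
              ((Real.sqrt (1 - g21 - g20) : ℝ) : ℂ)] p.2)) ∧
      (IsUnit (MPhi g10 g21 g20) ↔ (g10 ≠ 1 ∧ g21 + g20 ≠ 1)) := by
  have htri : ∀ p q : Fin 3 × Fin 3, (q.1 < p.1 ∨ (q.1 = p.1 ∧ q.2 < p.2)) →
      MPhi g10 g21 g20 p q = 0 := by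
    rintro ⟨p1, p2⟩ ⟨q1, q2⟩ h
    fin_cases p1 <;> fin_cases p2 <;> fin_cases q1 <;> fin_cases q2 <;>
      first
        | (exfalso; revert h; decide)
        | simp [MPhi_apply', K0, K1, K2, Matrix.vecHead, Matrix.vecTail]
  have hdiag : ∀ p : Fin 3 × Fin 3,
      MPhi g10 g21 g20 p p =
        (![(1 : ℂ), ((Real.sqrt (1 - g10) : ℝ) : ℂ),
            ((Real.sqrt (1 - g21 - g20) : ℝ) : ℂ)] p.1) *
          (![(1 : ℂ), ((Real.sqrt (1 - g10) : ℝ) : ℂ),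
            ((Real.sqrt (1 - g21 - g20) : ℝ) : ℂ)] p.2) := by
    rintro ⟨p1, p2⟩
    fin_cases p1 <;> fin_cases p2 <;>
      simp [MPhi_apply', K0, K1, K2, Matrix.vecHead, Matrix.vecTail]
  refine ⟨htri, hdiag, ?_⟩
  have hN : ((MPhi g10 g21 g20).submatrix (finProdFinEquiv (m := 3) (n := 3)).symm (finProdFinEquiv (m := 3) (n := 3)).symm).BlockTriangular id := by
    intro i j hij
    simp only [Matrix.submatrix_apply]
    refine htri _ _ ?_
    revert hij
    revert i j
    decide
  have hdet : (MPhi g10 g21 g20).det = ∏ p : Fin 3 × Fin 3,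
      MPhi g10 g21 g20 p p := by
    rw [← Matrix.det_submatrix_equiv_self (finProdFinEquiv (m := 3) (n := 3)).symm, Matrix.det_of_upperTriangular hN]
    exact Equiv.prod_comp (finProdFinEquiv (m := 3) (n := 3)).symm (fun p => MPhi g10 g21 g20 p p)
  have ha : (((Real.sqrt (1 - g10) : ℝ) : ℂ) = 0) ↔ g10 = 1 := by
    rw [Complex.ofReal_eq_zero, Real.sqrt_eq_zero (by linarith)]
    constructor <;> intro <;> linarith
  have hb : (((Real.sqrt (1 - g21 - g20) : ℝ) : ℂ) = 0) ↔ g21 + g20 = 1 := by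
    rw [Complex.ofReal_eq_zero, Real.sqrt_eq_zero (by linarith)]
    constructor <;> intro <;> linarith
  rw [Matrix.isUnit_iff_isUnit_det, isUnit_iff_ne_zero, hdet,
    Finset.prod_congr rfl (fun p _ => hdiag p), Fintype.prod_prod_type]
  simp only [Fin.prod_univ_three, Matrix.cons_val_zero, Matrix.cons_val_one,
    Matrix.head_cons, Matrix.cons_val_two, Matrix.tail_cons, one_mul, mul_one]
  simp only [ne_eq, mul_eq_zero, not_or, ha, hb]
  tauto
end

section
/- When γ_{10} = 0, the qutrit ReMAD channel is not antidegradable in any parameter region where it has a two-dimensional noiseless subspace: the matrix unit |0⟩⟨1| lies in the kernel of the complementary channel Φ̃_Γ^{(γ_{10}=0)} but not in the kernel of Φ_Γ^{(γ_{10}=0)}; hence ker Φ̃_Γ ⊄ ker Φ_Γ. -/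
open Matrix
open scoped BigOperators
/-- The complementary channel of the qutrit ReMAD channel,
`Φ̃_Γ(ρ)_{e,e'} = Tr(K^{(e)} ρ K^{(e')†})`. -/
noncomputable def PhiC (g10 g21 g20 : ℝ) (ρ : Matrix (Fin 3) (Fin 3) ℂ) :
    Matrix (Fin 3) (Fin 3) ℂ :=
  Matrix.of fun e e' : Fin 3 =>
    Matrix.trace ((![K0 g10 g21 g20, K1 g10 g21, K2 g20] e) * ρ *
      (![K0 g10 g21 g20, K1 g10 g21, K2 g20] e')ᴴ)

/-! Of the Kraus operators only `K0` has a nonzero first column, and only `K1` a nonzero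
`(0, 1)` entry. Hence `Φ(|0⟩⟨1|) = √(1 - γ₁₀) |0⟩⟨1|` while `Φ̃(|0⟩⟨1|) = √γ₁₀ |0⟩⟨1|`,
so at `γ₁₀ = 0` the matrix unit `|0⟩⟨1|` is killed by `Φ̃` and fixed by `Φ`. -/

section single

variable {l m n o α : Type*} [Fintype m] [Fintype n] [DecidableEq m] [DecidableEq n]
  [Semiring α] [StarRing α]

theorem mul_single_mul_conjTranspose_apply (A : Matrix l m α) (B : Matrix o n α)
    (i : m) (j : n) (c : α) (a : l) (b : o) :
    (A * single i j c * Bᴴ) a b = A a i * c * star (B b j) := by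
  simp [mul_apply, single_apply, ite_and]

theorem trace_mul_single_mul_conjTranspose (A : Matrix l m α) (B : Matrix l n α) [Fintype l]
    (i : m) (j : n) (c : α) :
    trace (A * single i j c * Bᴴ) = ∑ a, A a i * c * star (B a j) := by
  simp [trace, mul_single_mul_conjTranspose_apply]

end single

theorem Phi_single_zero_one (g10 g21 g20 : ℝ) :
    Phi g10 g21 g20 (single 0 1 1) = ((Real.sqrt (1 - g10) : ℝ) : ℂ) • single 0 1 1 := by
  ext i j
  simp only [Phi, Matrix.add_apply, mul_single_mul_conjTranspose_apply]
  fin_cases i <;> fin_cases j <;> simp [K0, K1, K2]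

theorem PhiC_single_zero_one (g10 g21 g20 : ℝ) :
    PhiC g10 g21 g20 (single 0 1 1) = ((Real.sqrt g10 : ℝ) : ℂ) • single 0 1 1 := by
  ext e e'
  simp only [PhiC, of_apply, trace_mul_single_mul_conjTranspose, Fin.sum_univ_three]
  fin_cases e <;> fin_cases e' <;> simp [K0, K1, K2]

theorem qutrit_remad_g10_zero_not_antidegradable_general (g21 g20 : ℝ) :
    PhiC 0 g21 g20 (Matrix.single 0 1 (1 : ℂ)) = 0 ∧
      Phi 0 g21 g20 (Matrix.single 0 1 (1 : ℂ)) ≠ 0 ∧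
      ¬ (∀ ρ : Matrix (Fin 3) (Fin 3) ℂ, PhiC 0 g21 g20 ρ = 0 → Phi 0 g21 g20 ρ = 0) := by
  have hPhiC : PhiC 0 g21 g20 (single 0 1 1) = 0 := by
    simp [PhiC_single_zero_one]
  have hPhi : Phi 0 g21 g20 (single 0 1 1) ≠ 0 := fun h => by
    simpa [Phi_single_zero_one] using congr_fun₂ h 0 1
  exact ⟨hPhiC, hPhi, fun hker => hPhi (hker _ hPhiC)⟩

/-- For `γ₁₀ = 0`, the matrix unit `|0⟩⟨1|` lies in the kernel of the complementary
channel `Φ̃_Γ^{(γ₁₀=0)}` but not in the kernel of `Φ_Γ^{(γ₁₀=0)}`; hence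
`ker Φ̃_Γ ⊄ ker Φ_Γ`, so the channel cannot be antidegradable. -/
theorem qutrit_remad_g10_zero_not_antidegradable (g21 g20 : ℝ)
    (h21 : 0 ≤ g21) (h21' : g21 ≤ 1) (h20 : 0 ≤ g20) (h20' : g20 ≤ 1)
    (hsum : g21 + g20 ≤ 1) :
    PhiC 0 g21 g20 (Matrix.single 0 1 (1 : ℂ)) = 0 ∧
      Phi 0 g21 g20 (Matrix.single 0 1 (1 : ℂ)) ≠ 0 ∧
      ¬ (∀ ρ : Matrix (Fin 3) (Fin 3) ℂ, PhiC 0 g21 g20 ρ = 0 → Phi 0 g21 g20 ρ = 0) :=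
  qutrit_remad_g10_zero_not_antidegradable_general g21 g20
end

section
/- For the qutrit channel Φ'^{(γ_{21},γ_{20})} mapping qubit states on Span{|0⟩,|2⟩} into qutrit states, with 0 ≤ γ_{20} ≤ (1-γ_{21})/2, the single-decay MAD channel Φ^{(0,0,γ̄₃)} with γ̄₃ = (1-γ_{21}-2γ_{20})/(1-γ_{21}-γ_{20}) is a degrading map: Φ^{(0,0,γ̄₃)} ∘ Φ'^{(γ_{21},γ_{20})} = Φ̃'^{(γ_{21},γ_{20})}. -/
open Matrix
/-- The channel `Φ'^{(γ₂₁,γ₂₀)}` mapping qubit states on `Span{|0⟩,|2⟩}` (here encoded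
as `2×2` matrices `τ`, with index `1` standing for level `|2⟩`) into qutrit states. -/
noncomputable def PhiPrime (g21 g20 : ℝ) (τ : Matrix (Fin 2) (Fin 2) ℂ) :
    Matrix (Fin 3) (Fin 3) ℂ :=
  !![1 - ((1 - g20 : ℝ) : ℂ) * τ 1 1, 0, ((Real.sqrt (1 - g21 - g20) : ℝ) : ℂ) * τ 0 1;
     0, ((g21 : ℝ) : ℂ) * τ 1 1, 0;
     ((Real.sqrt (1 - g21 - g20) : ℝ) : ℂ) * τ 1 0, 0, ((1 - g21 - g20 : ℝ) : ℂ) * τ 1 1]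

/-- The complementary channel `Φ̃'^{(γ₂₁,γ₂₀)}`. -/
noncomputable def PhiPrimeC (g21 g20 : ℝ) (τ : Matrix (Fin 2) (Fin 2) ℂ) :
    Matrix (Fin 3) (Fin 3) ℂ :=
  !![1 - ((g21 + g20 : ℝ) : ℂ) * τ 1 1, 0, ((Real.sqrt g20 : ℝ) : ℂ) * τ 0 1;
     0, ((g21 : ℝ) : ℂ) * τ 1 1, 0;
     ((Real.sqrt g20 : ℝ) : ℂ) * τ 1 0, 0, ((g20 : ℝ) : ℂ) * τ 1 1]

/-- For `0 ≤ γ₂₀ ≤ (1-γ₂₁)/2`, the single-decay MAD channel `Φ^{(0,0,γ̄₃)}` with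
`γ̄₃ = (1-γ₂₁-2γ₂₀)/(1-γ₂₁-γ₂₀)` is a degrading map:
`Φ^{(0,0,γ̄₃)} ∘ Φ'^{(γ₂₁,γ₂₀)} = Φ̃'^{(γ₂₁,γ₂₀)}`. -/
theorem single_decay_degrades_PhiPrime (g21 g20 : ℝ)
    (h21 : 0 ≤ g21) (h20 : 0 ≤ g20) (hsum : g21 + g20 < 1)
    (hdeg : g20 ≤ (1 - g21) / 2) (τ : Matrix (Fin 2) (Fin 2) ℂ) :
    Phi 0 0 ((1 - g21 - 2 * g20) / (1 - g21 - g20)) (PhiPrime g21 g20 τ) =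
      PhiPrimeC g21 g20 τ := by
  have ha0 : 0 < 1 - g21 - g20 := by linarith
  simp only [Phi, K0, K1, K2, PhiPrime, PhiPrimeC]
  rw [show (1:ℝ) - 0 - (1 - g21 - 2 * g20) / (1 - g21 - g20) = g20 / (1 - g21 - g20) by
        field_simp; ring,
      show (1:ℝ) - 0 = 1 by ring, Real.sqrt_one, Real.sqrt_zero]
  set sa := Real.sqrt (1 - g21 - g20) with hsa
  set sb := Real.sqrt (g20 / (1 - g21 - g20)) with hsb
  set sc := Real.sqrt ((1 - g21 - 2 * g20) / (1 - g21 - g20)) with hsc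
  set sg := Real.sqrt g20 with hsg
  have f1 : sb * sa = sg := by
    rw [hsb, hsa, hsg, ← Real.sqrt_mul (by positivity), div_mul_cancel₀ _ (ne_of_gt ha0)]
  have f2 : sb * sb * (1 - g21 - g20) = g20 := by
    rw [hsb, Real.mul_self_sqrt (by positivity), div_mul_cancel₀ _ (ne_of_gt ha0)]
  have f3 : sc * sc * (1 - g21 - g20) = 1 - g21 - 2 * g20 := by
    rw [hsc, Real.mul_self_sqrt (div_nonneg (by linarith) ha0.le),
      div_mul_cancel₀ _ (ne_of_gt ha0)]
  have c1 : ((sb : ℝ) : ℂ) * ((sa : ℝ) : ℂ) = ((sg : ℝ) : ℂ) := by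
    exact_mod_cast congrArg Complex.ofReal f1
  have c2 : ((sb : ℝ) : ℂ) * ((sb : ℝ) : ℂ) * ((1 - g21 - g20 : ℝ) : ℂ) = ((g20 : ℝ) : ℂ) := by
    exact_mod_cast congrArg Complex.ofReal f2
  have c3 : ((sc : ℝ) : ℂ) * ((sc : ℝ) : ℂ) * ((1 - g21 - g20 : ℝ) : ℂ)
      = ((1 - g21 - 2 * g20 : ℝ) : ℂ) := by
    exact_mod_cast congrArg Complex.ofReal f3
  push_cast at c1 c2 c3
  clear_value sa sb sc sg
  ext i j
  fin_cases i <;> fin_cases j <;>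
    simp [Matrix.mul_apply, Matrix.vecMul, dotProduct, Matrix.vecHead, Matrix.vecTail, Fin.sum_univ_three, Matrix.conjTranspose_apply,
      Complex.conj_ofReal] <;>
    push_cast <;>
    first
      | ring1
      | linear_combination τ 1 1 * c3
      | linear_combination τ 0 1 * c1
      | linear_combination τ 1 0 * c1
      | linear_combination τ 1 1 * c2
      | linear_combination τ 1 1 * c3 + τ 1 1 * c2
end
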